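/- arXiv:1910.14134 — 6 statements merged into one kernel-verified Lean document; each statement's English description precedes it below -/
import Mathlib

section
/- Fix 1/2 < τ < 1 and define, for a metric d on a finite type X, the data-dependent threshold λ(d) = τ · max_{x,y ∈ X} d(x, y). Then for every metric d on X and every α > 0, the connected components of the single-linkage threshold graph G(α·d, λ(α·d)) coincide with the connected components of G(d, λ(d)). (This is the Meta-Scale-Invariance property of the single-linkage meta-clustering algorithm that selects threshold τ · ρ* with ρ* the maximum pairwise distance.) -/
/-- `d` is a metric on `X`: symmetric, nonnegative, vanishing exactly on the
diagonal, and satisfying the triangle inequality. -/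
def IsMetric {X : Type*} (d : X → X → ℝ) : Prop :=
  (∀ x y, d x y = d y x) ∧ (∀ x y, 0 ≤ d x y) ∧
    (∀ x y, d x y = 0 ↔ x = y) ∧ ∀ x y z, d x z ≤ d x y + d y z

/-- The single-linkage threshold graph `G(d, lam)`: distinct points `x, y`
are adjacent iff `d x y < lam`. -/
def slGraph {X : Type*} (d : X → X → ℝ) (lam : ℝ) : SimpleGraph X :=
  SimpleGraph.fromRel (fun x y => d x y < lam)

/-- The maximum pairwise distance `ρ*(d) = max_{x,y} d x y` (as a `ciSup`,
which for a nonempty finite type is the maximum). -/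
noncomputable def rhoStar {X : Type*} [Fintype X] (d : X → X → ℝ) : ℝ :=
  ⨆ p : X × X, d p.1 p.2

/-- **Meta-Scale-Invariance.** Fix `1/2 < τ < 1` and set the
data-dependent threshold `Λ(d) = τ * ρ*(d)`. For every metric `d` on a finite
(nonempty) type `X` and every `α > 0`, the connected components of
`G(α·d, Λ(α·d))` coincide with those of `G(d, Λ(d))`. -/
theorem meta_scale_invariance {X : Type*} [Fintype X] [Nonempty X]
    (τ : ℝ) (hτ₁ : 1 / 2 < τ) (hτ₂ : τ < 1)
    (d : X → X → ℝ) (hd : IsMetric d) (α : ℝ) (hα : 0 < α) :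
    ∀ x y : X,
      (slGraph (fun a b => α * d a b)
          (τ * rhoStar (fun a b => α * d a b))).Reachable x y ↔
        (slGraph d (τ * rhoStar d)).Reachable x y := by

  have hrho : rhoStar (fun a b => α * d a b) = α * rhoStar d := by
    unfold rhoStar
    rw [Real.mul_iSup_of_nonneg hα.le]
  have hgraph : slGraph (fun a b => α * d a b)
      (τ * rhoStar (fun a b => α * d a b)) = slGraph d (τ * rhoStar d) := by
    rw [hrho]
    ext a b
    simp only [slGraph, SimpleGraph.fromRel_adj]
    constructor
    · rintro ⟨hab, h | h⟩ <;> refine ⟨hab, ?_⟩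
      · left; rw [mul_comm τ (α * rhoStar d), mul_assoc] at h
        exact lt_of_mul_lt_mul_left h hα.le |>.trans_eq (mul_comm _ _)
      · right; rw [mul_comm τ (α * rhoStar d), mul_assoc] at h
        exact lt_of_mul_lt_mul_left h hα.le |>.trans_eq (mul_comm _ _)
    · rintro ⟨hab, h | h⟩ <;> refine ⟨hab, ?_⟩
      · left
        calc α * d a b < α * (τ * rhoStar d) := by exact (mul_lt_mul_iff_right₀ hα).2 h
          _ = τ * (α * rhoStar d) := by ring
      · right
        calc α * d b a < α * (τ * rhoStar d) := by exact (mul_lt_mul_iff_right₀ hα).2 h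
          _ = τ * (α * rhoStar d) := by ring
  intro x y
  rw [hgraph]
end

section
/- Let r be an equivalence relation on a finite type X, and let d be the metric with d(x, y) = 0 if x = y, d(x, y) = 1 if x ≠ y and r x y, and d(x, y) = 2 otherwise. Then for any threshold λ with 1 < λ < 2, two points x, y ∈ X lie in the same connected component of the single-linkage threshold graph G(d, λ) if and only if r x y. That is, single-linkage clustering at threshold λ exactly recovers the equivalence classes of r. -/
open scoped Classical

/-- Let `r` be an equivalence relation on a finite type `X`
and `d` the metric with `d x y = 0` if `x = y`, `1` if `x ≠ y ∧ r x y`, and `2`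
otherwise. Then for any threshold `1 < lam < 2`, two points lie in the same
connected component of the single-linkage threshold graph `G(d, lam)` iff they
are `r`-equivalent: single-linkage recovers the equivalence classes of `r`. -/
theorem slGraph_recovers_equivalence {X : Type*} [Fintype X]
    (r : X → X → Prop) (hr : Equivalence r)
    (lam : ℝ) (hlam₁ : 1 < lam) (hlam₂ : lam < 2) :
    ∀ x y : X,
      (slGraph (fun x y => if x = y then (0 : ℝ) else if r x y then 1 else 2)
          lam).Reachable x y ↔ r x y := by
  intro x y
  have hadj : ∀ a b : X,
      (slGraph (fun x y => if x = y then (0 : ℝ) else if r x y then 1 else 2)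
        lam).Adj a b ↔ a ≠ b ∧ r a b := by
    intro a b
    simp only [slGraph, SimpleGraph.fromRel_adj]
    constructor
    · rintro ⟨hne, h | h⟩
      · refine ⟨hne, ?_⟩
        rw [if_neg hne] at h
        by_contra hrab
        rw [if_neg hrab] at h; linarith
      · refine ⟨hne, ?_⟩
        rw [if_neg (Ne.symm hne)] at h
        by_contra hrab
        have : ¬ r b a := fun hba => hrab (hr.symm hba)
        rw [if_neg this] at h; linarith
    · rintro ⟨hne, hrab⟩
      refine ⟨hne, Or.inl ?_⟩
      rw [if_neg hne, if_pos hrab]; linarith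
  constructor
  · intro h
    obtain ⟨w⟩ := h
    induction w with
    | nil => exact hr.refl _
    | cons h _ ih => exact hr.trans ((hadj _ _).mp h).2 ih
  · intro hrxy
    by_cases hxy : x = y
    · exact hxy ▸ SimpleGraph.Reachable.refl x
    · exact SimpleGraph.Adj.reachable ((hadj x y).mpr ⟨hxy, hrxy⟩)
end

section
/- Let X be a finite type with more than two elements, let a, b ∈ X be distinct, and let d be the metric with d(x, y) = 0 if x = y, d(x, y) = 2 if {x, y} = {a, b}, and d(x, y) = 1 for all other distinct pairs. Then for any threshold λ with 1 < λ < 2, the single-linkage threshold graph G(d, λ) is connected; in particular, single-linkage clustering at threshold λ places all of X in a single cluster. -/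
open scoped Classical

/-- Let `X` be a finite type with more than two elements,
`a ≠ b`, and `d` the metric with `d x y = 0` if `x = y`, `d x y = 2` if
`{x, y} = {a, b}`, and `d x y = 1` for other distinct pairs. For any threshold
`1 < lam < 2`, the single-linkage threshold graph `G(d, lam)` is connected:
single-linkage clustering places all of `X` in a single cluster. -/
theorem slGraph_two_apart_connected {X : Type*} [Fintype X]
    (hcard : 2 < Fintype.card X) (a b : X) (hab : a ≠ b)
    (lam : ℝ) (hlam₁ : 1 < lam) (hlam₂ : lam < 2) :
    (slGraph (fun x y =>
      if x = y then (0 : ℝ)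
      else if (x = a ∧ y = b) ∨ (x = b ∧ y = a) then 2 else 1) lam).Connected := by
  set G := slGraph (fun x y =>
      if x = y then (0 : ℝ)
      else if (x = a ∧ y = b) ∨ (x = b ∧ y = a) then 2 else 1) lam with hG
  have hadj : ∀ x y : X, x ≠ y → ¬((x = a ∧ y = b) ∨ (x = b ∧ y = a)) → G.Adj x y := by
    intro x y hxy hbad
    refine ⟨hxy, Or.inl ?_⟩
    simp only [if_neg hxy, if_neg hbad]
    exact hlam₁
  -- find c distinct from a and b
  obtain ⟨c, hc⟩ : ∃ c : X, c ∉ ({a, b} : Finset X) := by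
    by_contra h
    push_neg at h
    have : Fintype.card X ≤ ({a, b} : Finset X).card := by
      have := Finset.card_le_card (fun x _ => h x : Finset.univ ⊆ ({a, b} : Finset X))
      simpa [Finset.card_univ] using this
    have h2 : ({a, b} : Finset X).card ≤ 2 := Finset.card_insert_le _ _ |>.trans (by simp)
    omega
  simp only [Finset.mem_insert, Finset.mem_singleton, not_or] at hc
  obtain ⟨hca, hcb⟩ := hc
  rw [SimpleGraph.connected_iff]
  refine ⟨?_, ⟨a⟩⟩
  · intro x y
    by_cases hxy : x = y
    · exact hxy ▸ SimpleGraph.Reachable.refl x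
    by_cases hbad : (x = a ∧ y = b) ∨ (x = b ∧ y = a)
    · have h1 : G.Adj x c := by
        apply hadj <;> rcases hbad with ⟨rfl, rfl⟩ | ⟨rfl, rfl⟩ <;> tauto
      have h2 : G.Adj c y := by
        apply hadj <;> rcases hbad with ⟨rfl, rfl⟩ | ⟨rfl, rfl⟩ <;> tauto
      exact h1.reachable.trans h2.reachable
    · exact (hadj x y hxy hbad).reachable
end

section
/- Fix 1/2 < τ < 1. Let X be a finite type with more than two elements and let r be any equivalence relation on X. Then there exists a metric d on X such that, setting λ = τ · max_{x,y ∈ X} d(x, y), two points x, y ∈ X lie in the same connected component of the single-linkage threshold graph G(d, λ) if and only if r x y. (This is the Meta-Richness property: for every clustering C of X there is a distance function d such that the single-linkage meta-clustering algorithm with data-dependent threshold τ · ρ* outputs exactly C.) -/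
lemma metric_aux {X : Type*} (d : X → X → ℝ)
    (hsymm : ∀ x y, d x y = d y x) (hdiag : ∀ x, d x x = 0)
    (hlb : ∀ x y, x ≠ y → 1/2 ≤ d x y) (hub : ∀ x y, d x y ≤ 1) :
    IsMetric d := by
  refine ⟨hsymm, ?_, ?_, ?_⟩
  · intro x y
    rcases eq_or_ne x y with rfl | h
    · simp [hdiag]
    · linarith [hlb x y h]
  · intro x y
    constructor
    · intro h0
      by_contra h
      have := hlb x y h
      linarith
    · rintro rfl; exact hdiag x
  · intro x y z
    rcases eq_or_ne x y with rfl | hxy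
    · simp [hdiag]
    rcases eq_or_ne y z with rfl | hyz
    · simp [hdiag]
    have h1 := hlb x y hxy
    have h2 := hlb y z hyz
    have h3 := hub x z
    linarith

lemma rho_aux {X : Type*} [Fintype X] (d : X → X → ℝ) (p : X × X)
    (hp : d p.1 p.2 = 1) (hub : ∀ x y, d x y ≤ 1) : rhoStar d = 1 := by
  have hX : Nonempty (X × X) := ⟨p⟩
  apply le_antisymm
  · exact ciSup_le fun q => hub q.1 q.2
  · rw [← hp]
    exact le_ciSup (f := fun q : X × X => d q.1 q.2)
      (Set.Finite.bddAbove (Set.finite_range _)) p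

/-- **Meta-Richness.** Fix `1/2 < τ < 1`. For a finite type `X`
with more than two elements and any equivalence relation `r` on `X`, there is a
metric `d` such that, with threshold `λ = τ * ρ*(d)`, two points are in the
same connected component of `G(d, λ)` iff they are `r`-equivalent. -/
theorem meta_richness {X : Type*} [Fintype X]
    (hcard : 2 < Fintype.card X)
    (τ : ℝ) (hτ₁ : 1 / 2 < τ) (hτ₂ : τ < 1)
    (r : X → X → Prop) (hr : Equivalence r) :
    ∃ d : X → X → ℝ, IsMetric d ∧
      ∀ x y : X, (slGraph d (τ * rhoStar d)).Reachable x y ↔ r x y := by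
  classical
  by_cases hall : ∀ x y, r x y
  · -- r is the total relation: need a connected threshold graph
    have h1 : 1 < Fintype.card X := by omega
    obtain ⟨a, b, hab⟩ := Fintype.exists_pair_of_one_lt_card h1
    have hc : ∃ c, c ≠ a ∧ c ≠ b := by
      by_contra h
      push_neg at h
      have hsub : (Finset.univ : Finset X) ⊆ {a, b} := by
        intro x _
        simp only [Finset.mem_insert, Finset.mem_singleton]
        rcases eq_or_ne x a with h' | h'
        · exact Or.inl h'
        · exact Or.inr (h x h')
      have := Finset.card_le_card hsub
      have h2 : ({a, b} : Finset X).card ≤ 2 := Finset.card_insert_le _ _ |>.trans (by simp)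
      rw [Finset.card_univ] at this
      omega
    obtain ⟨c, hca, hcb⟩ := hc
    set d : X → X → ℝ := fun x y =>
      if x = y then 0 else if (x = a ∧ y = b) ∨ (x = b ∧ y = a) then 1 else 1/2 with hd
    have hsymm : ∀ x y, d x y = d y x := by
      intro x y
      simp only [hd]
      split_ifs with h1 h2 h3 h4 h5 <;> first | rfl | tauto
    have hdiag : ∀ x, d x x = 0 := by intro x; simp [hd]
    have hlb : ∀ x y, x ≠ y → 1/2 ≤ d x y := by
      intro x y hne
      simp only [hd]
      split_ifs with h1 h2
      · exact absurd h1 hne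
      · norm_num
      · norm_num
    have hub : ∀ x y, d x y ≤ 1 := by
      intro x y
      simp only [hd]
      split_ifs <;> norm_num
    have hdab : d a b = 1 := by simp [hd, hab]
    have hrho : rhoStar d = 1 := rho_aux d (a, b) hdab hub
    have hadj : ∀ x y : X, x ≠ y → ¬((x = a ∧ y = b) ∨ (x = b ∧ y = a)) →
        (slGraph d (τ * rhoStar d)).Adj x y := by
      intro x y hne hnp
      rw [hrho, mul_one]
      rw [slGraph, SimpleGraph.fromRel_adj]
      refine ⟨hne, Or.inl ?_⟩
      have : d x y = 1/2 := by simp [hd, hne, hnp]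
      rw [this]; linarith
    refine ⟨d, metric_aux d hsymm hdiag hlb hub, ?_⟩
    intro x y
    constructor
    · intro _; exact hall x y
    · intro _
      rcases eq_or_ne x y with rfl | hne
      · exact SimpleGraph.Reachable.refl x
      by_cases hp : (x = a ∧ y = b) ∨ (x = b ∧ y = a)
      · rcases hp with ⟨rfl, rfl⟩ | ⟨rfl, rfl⟩
        · exact ((hadj x c (Ne.symm hca) (by tauto)).reachable).trans
            ((hadj c y hcb (by tauto)).reachable)
        · exact ((hadj x c (Ne.symm hcb) (by tauto)).reachable).trans
            ((hadj c y hca (by tauto)).reachable)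
      · exact (hadj x y hne hp).reachable
  · -- r is not total
    push_neg at hall
    obtain ⟨u, v, huv⟩ := hall
    have huvne : u ≠ v := by rintro rfl; exact huv (hr.refl u)
    set d : X → X → ℝ := fun x y =>
      if x = y then 0 else if r x y then 1/2 else 1 with hd
    have hsymm : ∀ x y, d x y = d y x := by
      intro x y
      simp only [hd]
      split_ifs with h1 h2 h3 h4 h5 <;>
        first | rfl | tauto | (exact absurd (hr.symm ‹r _ _›) ‹_›)
    have hdiag : ∀ x, d x x = 0 := by intro x; simp [hd]
    have hlb : ∀ x y, x ≠ y → 1/2 ≤ d x y := by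
      intro x y hne
      simp only [hd]
      split_ifs with h1 h2
      · exact absurd h1 hne
      · norm_num
      · norm_num
    have hub : ∀ x y, d x y ≤ 1 := by
      intro x y
      simp only [hd]
      split_ifs <;> norm_num
    have hduv : d u v = 1 := by simp [hd, huvne, huv]
    have hrho : rhoStar d = 1 := rho_aux d (u, v) hduv hub
    have key : ∀ x y : X, (slGraph d (τ * rhoStar d)).Adj x y → r x y := by
      intro x y h
      rw [hrho, mul_one, slGraph, SimpleGraph.fromRel_adj] at h
      obtain ⟨hne, hlt⟩ := h
      by_contra hrxy
      have h1 : d x y = 1 := by simp [hd, hne, hrxy]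
      have h2 : d y x = 1 := by
        simp only [hd]
        rw [if_neg (Ne.symm hne), if_neg (fun h => hrxy (hr.symm h))]
      rcases hlt with h | h
      · rw [h1] at h; linarith
      · rw [h2] at h; linarith
    refine ⟨d, metric_aux d hsymm hdiag hlb hub, ?_⟩
    intro x y
    constructor
    · intro h
      obtain ⟨w⟩ := h
      induction w with
      | nil => exact hr.refl _
      | cons hadj _ ih => exact hr.trans (key _ _ hadj) ih
    · intro hrxy
      rcases eq_or_ne x y with rfl | hne
      · exact SimpleGraph.Reachable.refl x
      have : (slGraph d (τ * rhoStar d)).Adj x y := by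
        rw [hrho, mul_one, slGraph, SimpleGraph.fromRel_adj]
        refine ⟨hne, Or.inl ?_⟩
        have : d x y = 1/2 := by simp [hd, hne, hrxy]
        rw [this]; linarith
      exact this.reachable
end

section
/- Let X be a finite type, d a metric on X, and λ > 0. Let C denote the clustering of X given by the connected components of the single-linkage threshold graph G(d, λ). Let d' be another metric on X such that for all x, y ∈ X: if x and y lie in the same component of G(d, λ) then d'(x, y) ≤ d(x, y), and if x and y lie in different components of G(d, λ) then d'(x, y) ≥ d(x, y). Then the connected components of G(d', λ) coincide with those of G(d, λ); that is, single-linkage clustering at threshold λ applied to d' produces the same partition C. (This is the Meta-Consistency property of the single-linkage meta-clustering algorithm: the clustering algorithm A_λ selected from d returns the same clustering on any d' obtained by shrinking intra-cluster distances and expanding inter-cluster distances.) -/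
lemma reach_of_adj_reach {X : Type*} {G H : SimpleGraph X}
    (h : ∀ a b, G.Adj a b → H.Reachable a b) :
    ∀ x y, G.Reachable x y → H.Reachable x y := by
  intro x y ⟨w⟩
  induction w with
  | nil => exact SimpleGraph.Reachable.refl _
  | cons hadj _ ih => exact (h _ _ hadj).trans ih

/-- **Meta-Consistency.** Let `d` be a metric on a finite type
`X` and `lam > 0`, with clustering given by the connected components of
`G(d, lam)`. If `d'` is another metric that shrinks intra-cluster distances
(`d' x y ≤ d x y` whenever `x, y` are in the same component of `G(d, lam)`)
and expands inter-cluster distances (`d' x y ≥ d x y` whenever they are in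
different components), then the components of `G(d', lam)` coincide with those
of `G(d, lam)`. -/
theorem meta_consistency {X : Type*} [Fintype X]
    (d d' : X → X → ℝ) (hd : IsMetric d) (hd' : IsMetric d')
    (lam : ℝ) (hlam : 0 < lam)
    (hsame : ∀ x y : X, (slGraph d lam).Reachable x y → d' x y ≤ d x y)
    (hdiff : ∀ x y : X, ¬ (slGraph d lam).Reachable x y → d x y ≤ d' x y) :
    ∀ x y : X, (slGraph d' lam).Reachable x y ↔ (slGraph d lam).Reachable x y := by
  intro x y
  constructor
  · intro hreach
    refine reach_of_adj_reach (fun a b hab => ?_) x y hreach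
    obtain ⟨hne, h1⟩ := hab
    have hlt : d' a b < lam := by
      rcases h1 with h | h
      · exact h
      · rw [hd'.1]; exact h
    by_cases hr : (slGraph d lam).Reachable a b
    · exact hr
    · have : d a b < lam := lt_of_le_of_lt (hdiff a b hr) hlt
      exact SimpleGraph.Adj.reachable ⟨hne, Or.inl this⟩
  · intro hreach
    refine reach_of_adj_reach (fun a b hab => ?_) x y hreach
    obtain ⟨hne, h1⟩ := hab
    have hlt : d a b < lam := by
      rcases h1 with h | h
      · exact h
      · rw [hd.1]; exact h
    have hr : (slGraph d lam).Reachable a b :=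
      SimpleGraph.Adj.reachable ⟨hne, Or.inl hlt⟩
    exact SimpleGraph.Adj.reachable ⟨hne, Or.inl (lt_of_le_of_lt (hsame a b hr) hlt)⟩
end

section
/- Fix 1/2 < τ < 1 and let X be a finite type with more than two elements. There exists a threshold-selection function Λ assigning to each metric d on X a positive real number (namely Λ(d) = τ · max_{x,y} d(x,y)) such that the meta-clustering algorithm M which maps d to the single-linkage clustering at threshold Λ(d) satisfies all three meta-clustering axioms simultaneously: (Meta-Scale-Invariance) for every metric d and every α > 0, the components of G(α·d, Λ(α·d)) equal the components of G(d, Λ(d)); (Meta-Richness) for every equivalence relation r on X there exists a metric d such that the components of G(d, Λ(d)) are exactly the equivalence classes of r; (Meta-Consistency) for every metric d with clustering C given by the components of G(d, Λ(d)), and every metric d' satisfying d'(x, y) ≤ d(x, y) for x, y in the same cluster of C and d'(x, y) ≥ d(x, y) for x, y in different clusters of C, the components of G(d', Λ(d)) equal the components of G(d, Λ(d)). -/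
private lemma reach_of_reach {X : Type*} {G H : SimpleGraph X}
    (h : ∀ x y, H.Adj x y → G.Reachable x y) :
    ∀ x y, H.Reachable x y → G.Reachable x y := by
  intro x y hxy
  obtain ⟨w⟩ := hxy
  induction w with
  | nil => exact SimpleGraph.Reachable.refl _
  | cons a p ih => exact (h _ _ a).trans ih

private lemma rel_of_reach {X : Type*} {G : SimpleGraph X} {r : X → X → Prop}
    (hr : Equivalence r) (h : ∀ x y, G.Adj x y → r x y) :
    ∀ x y, G.Reachable x y → r x y := by
  intro x y hxy
  obtain ⟨w⟩ := hxy
  induction w with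
  | nil => exact hr.refl _
  | cons a p ih => exact hr.trans (h _ _ a) ih

private lemma slGraph_adj {X : Type*} {d : X → X → ℝ} (hsymm : ∀ x y, d x y = d y x)
    (lam : ℝ) (x y : X) :
    (slGraph d lam).Adj x y ↔ x ≠ y ∧ d x y < lam := by
  simp [slGraph, SimpleGraph.fromRel_adj, hsymm y x]

private lemma le_rhoStar {X : Type*} [Fintype X] (d : X → X → ℝ) (x y : X) :
    d x y ≤ rhoStar d :=
  le_ciSup (f := fun p : X × X => d p.1 p.2)
    (Set.Finite.bddAbove (Set.finite_range _)) (x, y)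

private lemma rhoStar_le {X : Type*} [Fintype X] [Nonempty X] (d : X → X → ℝ) {c : ℝ}
    (h : ∀ x y, d x y ≤ c) : rhoStar d ≤ c :=
  ciSup_le fun p => h p.1 p.2

private lemma rhoStar_smul {X : Type*} [Fintype X] (d : X → X → ℝ) {α : ℝ} (hα : 0 ≤ α) :
    rhoStar (fun a b => α * d a b) = α * rhoStar d :=
  (Real.mul_iSup_of_nonneg hα _).symm

open Classical in
/-- auxiliary "star-within-classes" metric used for Meta-Richness -/
private noncomputable def richD {X : Type*} (rep : X → X) : X → X → ℝ :=
  fun x y => if x = y then 0 else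
    if rep x = rep y ∧ (x = rep x ∨ y = rep y) then (1:ℝ) else 2

private lemma richD_symm {X : Type*} (rep : X → X) (x y : X) :
    richD rep x y = richD rep y x := by
  classical
  by_cases hxy : x = y
  · subst hxy; rfl
  · have hc : (rep x = rep y ∧ (x = rep x ∨ y = rep y)) ↔
        (rep y = rep x ∧ (y = rep y ∨ x = rep x)) := by
      constructor <;> rintro ⟨h1, h2⟩ <;> exact ⟨h1.symm, h2.symm⟩
    simp only [richD, if_neg hxy, if_neg (Ne.symm hxy)]
    rw [if_congr hc rfl rfl]

private lemma richD_nonneg {X : Type*} (rep : X → X) (x y : X) :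
    0 ≤ richD rep x y := by
  unfold richD; split_ifs <;> norm_num

private lemma richD_le_two {X : Type*} (rep : X → X) (x y : X) :
    richD rep x y ≤ 2 := by
  unfold richD; split_ifs <;> norm_num

private lemma one_le_richD {X : Type*} (rep : X → X) {x y : X} (h : x ≠ y) :
    1 ≤ richD rep x y := by
  unfold richD; split_ifs <;> first | exact absurd ‹x = y› h | norm_num

private lemma richD_eq_zero_iff {X : Type*} (rep : X → X) (x y : X) :
    richD rep x y = 0 ↔ x = y := by
  unfold richD; split_ifs <;> simp_all

private lemma richD_isMetric {X : Type*} (rep : X → X) : IsMetric (richD rep) := by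
  refine ⟨richD_symm rep, richD_nonneg rep, richD_eq_zero_iff rep, ?_⟩
  intro x y z
  by_cases hxy : x = y
  · subst hxy
    have h0 : richD rep x x = 0 := (richD_eq_zero_iff rep x x).mpr rfl
    rw [h0]; linarith
  by_cases hyz : y = z
  · subst hyz
    have h0 : richD rep y y = 0 := (richD_eq_zero_iff rep y y).mpr rfl
    rw [h0]; linarith
  have h1 := one_le_richD rep hxy
  have h2 := one_le_richD rep hyz
  have h3 := richD_le_two rep x z
  linarith

private lemma richD_lt_iff {X : Type*} (rep : X → X) {lam : ℝ} (h1 : 1 < lam) (h2 : lam < 2)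
    {x y : X} (hxy : x ≠ y) :
    richD rep x y < lam ↔ (rep x = rep y ∧ (x = rep x ∨ y = rep y)) := by
  classical
  simp only [richD, if_neg hxy]
  split_ifs with h
  · exact iff_of_true h1 h
  · simp only [h, iff_false]; linarith

/-- **the possibility of meta-clustering.** Fix `1/2 < τ < 1`
and a finite type `X` with more than two elements. There is a threshold
selection `Λ` assigning to each metric `d` a positive real (namely
`Λ d = τ * ρ*(d)`) such that the meta-clustering algorithm mapping `d` to
single-linkage clustering at threshold `Λ d` simultaneously satisfies
Meta-Scale-Invariance, Meta-Richness, and Meta-Consistency. -/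
theorem meta_clustering_possible {X : Type*} [Fintype X]
    (hcard : 2 < Fintype.card X)
    (τ : ℝ) (hτ₁ : 1 / 2 < τ) (hτ₂ : τ < 1) :
    ∃ Λ : (X → X → ℝ) → ℝ,
      -- `Λ` assigns to each metric a positive threshold
      (∀ d : X → X → ℝ, IsMetric d → 0 < Λ d) ∧
      -- Meta-Scale-Invariance
      (∀ d : X → X → ℝ, IsMetric d → ∀ α : ℝ, 0 < α →
        ∀ x y : X,
          (slGraph (fun a b => α * d a b) (Λ (fun a b => α * d a b))).Reachable x y ↔
            (slGraph d (Λ d)).Reachable x y) ∧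
      -- Meta-Richness
      (∀ r : X → X → Prop, Equivalence r →
        ∃ d : X → X → ℝ, IsMetric d ∧
          ∀ x y : X, (slGraph d (Λ d)).Reachable x y ↔ r x y) ∧
      -- Meta-Consistency
      (∀ d d' : X → X → ℝ, IsMetric d → IsMetric d' →
        (∀ x y : X, (slGraph d (Λ d)).Reachable x y → d' x y ≤ d x y) →
        (∀ x y : X, ¬ (slGraph d (Λ d)).Reachable x y → d x y ≤ d' x y) →
        ∀ x y : X,
          (slGraph d' (Λ d)).Reachable x y ↔ (slGraph d (Λ d)).Reachable x y) := by
  classical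
  haveI : Nontrivial X := Fintype.one_lt_card_iff_nontrivial.mp (by omega)
  haveI : Nonempty X := inferInstance
  refine ⟨fun d => τ * rhoStar d, ?_, ?_, ?_, ?_⟩
  · -- positivity
    intro d hd
    obtain ⟨x, y, hxy⟩ := exists_pair_ne X
    have h0 : 0 < d x y :=
      lt_of_le_of_ne (hd.2.1 x y) fun h => hxy ((hd.2.2.1 x y).mp h.symm)
    have := le_rhoStar d x y
    have : 0 < rhoStar d := lt_of_lt_of_le h0 this
    show 0 < τ * rhoStar d
    nlinarith
  · -- Meta-Scale-Invariance
    intro d hd α hα x y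
    have hg : slGraph (fun a b => α * d a b) (τ * rhoStar fun a b => α * d a b)
        = slGraph d (τ * rhoStar d) := by
      ext a b
      rw [slGraph_adj (fun u v => by rw [hd.1 u v]), slGraph_adj hd.1,
        rhoStar_smul d hα.le]
      have key : α * d a b < τ * (α * rhoStar d) ↔ d a b < τ * rhoStar d := by
        rw [show τ * (α * rhoStar d) = α * (τ * rhoStar d) by ring]
        exact mul_lt_mul_iff_right₀ hα
      rw [key]
    rw [hg]
  · -- Meta-Richness
    intro r hr
    letI s : Setoid X := ⟨r, hr⟩
    set rep : X → X := fun x => (Quotient.mk s x).out with hrepdef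
    have hrep : ∀ x, r (rep x) x := fun x => Quotient.mk_out x
    have hrep_eq : ∀ x y, r x y → rep x = rep y := by
      intro x y h
      show (Quotient.mk s x).out = (Quotient.mk s y).out
      rw [Quotient.sound h]
    have hidem : ∀ x, rep (rep x) = rep x := fun x => hrep_eq _ _ (hrep x)
    set d := richD rep with hd
    have hmet := richD_isMetric rep
    -- rhoStar d = 2
    obtain ⟨a, b, c, hab, hac, hbc⟩ := Fintype.two_lt_card_iff.mp hcard
    have hpair : ∃ u v : X, u ≠ v ∧ ¬(rep u = rep v ∧ (u = rep u ∨ v = rep v)) := by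
      by_cases h1 : rep a = rep b
      · by_cases h2 : rep a = rep c
        · -- all reps equal; at most one of a,b,c is its own rep
          by_cases ha : a = rep a
          · refine ⟨b, c, hbc, ?_⟩
            rintro ⟨-, hbc'⟩
            rcases hbc' with hb | hc
            · exact hab (ha.trans (h1.trans hb.symm))
            · exact hac (ha.trans (h2.trans hc.symm))
          · by_cases hb : b = rep b
            · refine ⟨a, c, hac, ?_⟩
              rintro ⟨-, hac'⟩
              rcases hac' with ha' | hc
              · exact ha ha'
              · exact hbc (hb.trans ((h1.symm.trans h2).trans hc.symm))
            · exact ⟨a, b, hab, fun h => h.2.elim ha hb⟩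
        · refine ⟨a, c, hac, fun h => h2 h.1⟩
      · exact ⟨a, b, hab, fun h => h1 h.1⟩
    have hρ : rhoStar d = 2 := by
      refine le_antisymm (rhoStar_le d (richD_le_two rep)) ?_
      obtain ⟨u, v, huv, hcond⟩ := hpair
      have : d u v = 2 := by
        simp only [hd, richD, if_neg huv, if_neg hcond]
      calc (2:ℝ) = d u v := this.symm
        _ ≤ rhoStar d := le_rhoStar d u v
    have hlam1 : 1 < τ * rhoStar d := by rw [hρ]; linarith
    have hlam2 : τ * rhoStar d < 2 := by rw [hρ]; linarith
    refine ⟨d, hmet, fun x y => ?_⟩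
    constructor
    · refine rel_of_reach hr ?_ x y
      intro u v huv
      rw [slGraph_adj hmet.1] at huv
      obtain ⟨hne, hlt⟩ := huv
      obtain ⟨h1, -⟩ := (richD_lt_iff rep hlam1 hlam2 hne).mp hlt
      exact hr.trans (hr.symm (hrep u)) (h1 ▸ hrep v)
    · intro hxy
      have key : ∀ u : X, (slGraph d (τ * rhoStar d)).Reachable u (rep u) := by
        intro u
        by_cases h : u = rep u
        · rw [← h]
        · refine SimpleGraph.Adj.reachable ?_
          rw [slGraph_adj hmet.1]
          exact ⟨h, (richD_lt_iff rep hlam1 hlam2 h).mpr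
            ⟨(hidem u).symm, Or.inr (hidem u).symm⟩⟩
      have hre : rep x = rep y := hrep_eq x y hxy
      exact (key x).trans (hre ▸ (key y).symm)
  · -- Meta-Consistency
    intro d d' hd hd' h1 h2 x y
    set lam := τ * rhoStar d with hlam
    constructor
    · refine reach_of_reach ?_ x y
      intro u v huv
      rw [slGraph_adj hd'.1] at huv
      obtain ⟨hne, hlt⟩ := huv
      by_cases hre : (slGraph d lam).Reachable u v
      · exact hre
      · exact absurd (SimpleGraph.Adj.reachable
          ((slGraph_adj hd.1 lam u v).mpr ⟨hne, lt_of_le_of_lt (h2 u v hre) hlt⟩)) hre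
    · refine reach_of_reach ?_ x y
      intro u v huv
      rw [slGraph_adj hd.1] at huv
      obtain ⟨hne, hlt⟩ := huv
      have hre : (slGraph d lam).Reachable u v :=
        SimpleGraph.Adj.reachable ((slGraph_adj hd.1 lam u v).mpr ⟨hne, hlt⟩)
      exact SimpleGraph.Adj.reachable
        ((slGraph_adj hd'.1 lam u v).mpr ⟨hne, lt_of_le_of_lt (h1 u v hre) hlt⟩)
end
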